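/- Let G be a finite digraph with protector labeling f satisfying the local axioms: (A1) no directed cycle has all arcs unprotected by their sellers; (A2) for each vertex v with an in-arc protected by x ≠ v, all arcs incident to v are protected by v or x; (A3) for each v, x: v has an in-arc protected by x iff v has an out-arc protected by x. Let P = u_1,...,u_{p+1} be a simple path with u_1 = x and the last arc protected by x. Then every arc of P is protected by x. -/

import Mathlib

/-- The list of arcs (consecutive pairs) of a path given as a list of vertices. -/
def arcsOf {V : Type*} (p : List V) : List (V × V) := p.zip p.tail

/-- A directed cycle: a closed directed walk of length ≥ 1 with no repeated arcs. -/
def IsCycle {V : Type*} (A : Finset (V × V)) (p : List V) : Prop :=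
  p.Chain' (fun u v => (u, v) ∈ A) ∧ 2 ≤ p.length ∧ p.head? = p.getLast? ∧ (arcsOf p).Nodup

/-- Lengths of simple directed paths from `s` to `t`. -/
def SimplePathLens {V : Type*} (A : Finset (V × V)) (s t : V) : Set ℕ :=
  {n | ∃ p : List V, p.Chain' (fun u v => (u, v) ∈ A) ∧ p.Nodup ∧
        p.head? = some s ∧ p.getLast? = some t ∧ p.length = n + 1}

/-!
Call an arc seller-unprotected if its protector is not its seller; by (A1) these arcs form an
acyclic relation. Suppose some arc of the path is not protected by `x` and let `(r, s)` be the
last one. The next arc `(s, t)` is protected by `x`, so by (A3) and (A2) at `s`, the arc `(r, s)`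
is protected by its buyer `s`. Going backwards with (A2), no arc before it is protected by a
vertex occurring at or before its seller, so the whole path from `x` to `t` is seller-unprotected.
From `t`, arcs protected by `x` can be followed indefinitely by (A3), and each is
seller-unprotected unless its seller is `x`; by acyclicity such a walk reaches `x`, closing a
seller-unprotected cycle.
-/

open Relation

theorem Relation.ReflTransGen.exists_nodup_isChain {α : Type*} {r : α → α → Prop} {a b : α}
    (h : ReflTransGen r a b) :
    ∃ l : List α, l.Nodup ∧ l.IsChain r ∧ l.head? = some a ∧ l.getLast? = some b := by
  induction h with
  | refl => exact ⟨[a], by simp⟩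
  | @tail m c _ hmc ih =>
    obtain ⟨l, hnd, hch, hhead, hlast⟩ := ih
    by_cases hc : c ∈ l
    · obtain ⟨l₁, l₂, rfl⟩ := List.append_of_mem hc
      refine ⟨l₁ ++ [c], hnd.sublist (by simp), (List.isChain_split.mp hch).1, ?_, by simp⟩
      cases l₁ <;> simp_all
    · refine ⟨l ++ [c], hnd.append (List.nodup_singleton c) (by simpa using hc),
        hch.append (.singleton c) (by simp_all), ?_, by simp⟩
      cases l <;> simp_all

theorem Finite.reflTransGen_of_forall_exists_rel {α : Type*} [Finite α] {r : α → α → Prop}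
    (hr : ∀ a, ¬ TransGen r a a) {s : Set α} {b : α} (hs : ∀ a ∈ s, a ≠ b → ∃ c ∈ s, r a c)
    {a : α} (ha : a ∈ s) : ReflTransGen r a b := by
  have : Std.Irrefl (TransGen (flip r)) := ⟨fun a h => hr a (transGen_swap.mp h)⟩
  induction a using (Finite.wellFounded_of_trans_of_irrefl (TransGen (flip r))).induction with
  | _ a ih =>
    by_cases hab : a = b
    · exact hab ▸ .refl
    obtain ⟨c, hc, hac⟩ := hs a ha hab
    exact .head hac (ih c (.single hac) hc)

theorem List.IsChain.reflTransGen_of_head?_of_getLast? {α : Type*} {r : α → α → Prop}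
    {l : List α} {a b : α} (h : l.IsChain r) (ha : l.head? = some a) (hb : l.getLast? = some b) :
    ReflTransGen r a b := by
  obtain ⟨l, rfl⟩ := List.head?_eq_some_iff.mp ha
  rw [List.getLast?_eq_some_getLast (List.cons_ne_nil a l), Option.some.injEq] at hb
  exact List.relationReflTransGen_of_exists_isChain_cons l h hb

theorem List.notMem_of_nodup_append_cons {α : Type*} {l m : List α} {a : α}
    (h : (l ++ a :: m).Nodup) : a ∉ l :=
  fun ha => (List.nodup_middle.mp h).notMem (List.mem_append_left m ha)

section Arcs

variable {V : Type*}

@[simp] theorem arcsOf_nil : arcsOf ([] : List V) = [] := rfl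
@[simp] theorem arcsOf_singleton (a : V) : arcsOf [a] = [] := rfl
@[simp] theorem arcsOf_cons_cons (a b : V) (l : List V) :
    arcsOf (a :: b :: l) = (a, b) :: arcsOf (b :: l) := rfl

theorem arcsOf_append_pair (l : List V) (a b : V) :
    arcsOf (l ++ [a, b]) = arcsOf (l ++ [a]) ++ [(a, b)] := by
  induction l using List.twoStepInduction with
  | nil | singleton => rfl
  | cons_cons c d l _ ih => simpa using ih d

theorem exists_eq_append_pair_of_getLast?_arcsOf {p : List V} {a : V × V}
    (h : (arcsOf p).getLast? = some a) : ∃ l, p = l ++ [a.1, a.2] := by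
  obtain rfl | ⟨q, t, rfl⟩ := p.eq_nil_or_concat'
  · simp at h
  obtain rfl | ⟨l, s, rfl⟩ := q.eq_nil_or_concat'
  · simp at h
  simp only [List.append_assoc, List.singleton_append, arcsOf_append_pair,
    List.getLast?_concat, Option.some.injEq] at h
  exact ⟨l, by simp [← h]⟩

theorem forall_mem_arcsOf_of_isChain {R : V → V → Prop} {l : List V} (h : l.IsChain R) :
    ∀ a ∈ arcsOf l, R a.1 a.2 := by
  induction l using List.twoStepInduction with
  | nil | singleton => simp
  | cons_cons a b l _ ih =>
    rw [List.isChain_cons_cons] at h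
    simpa [h.1] using ih b h.2

theorem nodup_arcsOf_cons {v : V} {l : List V} (h : l.Nodup) : (arcsOf (v :: l)).Nodup :=
  .of_map Prod.snd <| by rwa [arcsOf, List.map_snd_zip (by simp)]

end Arcs

section Protectors

variable {V : Type*} {A : Finset (V × V)} {f : V × V → V}

def SellerUnprotected (A : Finset (V × V)) (f : V × V → V) (u v : V) : Prop :=
  (u, v) ∈ A ∧ f (u, v) ≠ u

theorem exists_isCycle_of_transGen {r : V → V → Prop} (hrA : ∀ u v, r u v → (u, v) ∈ A)
    {v : V} (h : TransGen r v v) : ∃ c, IsCycle A c ∧ ∀ a ∈ arcsOf c, r a.1 a.2 := by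
  obtain ⟨w, hvw, hwv⟩ := TransGen.head'_iff.mp h
  obtain ⟨l, hnd, hch, hhead, hlast⟩ := hwv.exists_nodup_isChain
  have hl : l ≠ [] := by rintro rfl; simp at hhead
  have hcyc : (v :: l).IsChain r := hch.cons (by simpa [hhead] using hvw)
  refine ⟨v :: l, ⟨hcyc.imp hrA, ?_, ?_, nodup_arcsOf_cons hnd⟩, forall_mem_arcsOf_of_isChain hcyc⟩
  · simpa [Nat.one_le_iff_ne_zero] using hl
  · simp [List.getLast?_cons, hlast]

theorem not_transGen_sellerUnprotected
    (hA1 : ¬ ∃ p : List V, IsCycle A p ∧ ∀ a ∈ arcsOf p, f a ≠ a.1) (v : V) :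
    ¬ TransGen (SellerUnprotected A f) v v := fun h =>
  hA1 <| (exists_isCycle_of_transGen (fun _ _ h => h.1) h).imp
    fun _ ⟨hc, ha⟩ => ⟨hc, fun a h => (ha a h).2⟩

theorem not_transGen_sellerUnprotected_of_protector_eq [Finite V]
    (hA1 : ¬ ∃ p : List V, IsCycle A p ∧ ∀ a ∈ arcsOf p, f a ≠ a.1)
    (hA3 : ∀ v x : V,
      (∃ u, (u, v) ∈ A ∧ f (u, v) = x) ↔ (∃ w, (v, w) ∈ A ∧ f (v, w) = x))
    {x u t : V} (hut : (u, t) ∈ A) (hf : f (u, t) = x) :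
    ¬ TransGen (SellerUnprotected A f) x t := by
  intro hxt
  have hreturn : ReflTransGen (SellerUnprotected A f) t x := by
    refine Finite.reflTransGen_of_forall_exists_rel (not_transGen_sellerUnprotected hA1)
      (s := {v | ∃ u, (u, v) ∈ A ∧ f (u, v) = x}) ?_ ⟨u, hut, hf⟩
    rintro v hv hvx
    obtain ⟨w, hvw, hfw⟩ := (hA3 v x).mp hv
    exact ⟨w, ⟨v, hvw, hfw⟩, hvw, hfw ▸ Ne.symm hvx⟩
  exact not_transGen_sellerUnprotected hA1 x (hxt.trans_left hreturn)

theorem isChain_sellerUnprotected_of_protector_notMem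
    (hA2 : ∀ v x : V, x ≠ v → (∃ u, (u, v) ∈ A ∧ f (u, v) = x) →
      ∀ a ∈ A, (a.1 = v ∨ a.2 = v) → (f a = v ∨ f a = x))
    {l : List V} {s t : V} (hnd : (l ++ [s, t]).Nodup)
    (hch : (l ++ [s, t]).IsChain (fun u v => (u, v) ∈ A)) (hst : f (s, t) ∉ l ++ [s]) :
    (l ++ [s, t]).IsChain (SellerUnprotected A f) := by
  induction l using List.reverseRecOn generalizing s t with
  | nil => simp_all [SellerUnprotected]
  | append_singleton l r ih =>
    simp only [List.append_assoc, List.cons_append, List.nil_append] at hnd hch hst ⊢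
    have hs : s ∉ l ++ [r] := List.notMem_of_nodup_append_cons (m := [t]) (by simpa using hnd)
    have hrs : f (r, s) ∉ l ++ [r] := by
      intro hmem
      have hne : f (r, s) ≠ s := fun h => hs (h ▸ hmem)
      simp only [List.isChain_append_cons_cons, List.isChain_cons_cons] at hch
      obtain ⟨-, hrsA, hstA, -⟩ := hch
      rcases hA2 s _ hne ⟨r, hrsA, rfl⟩ (s, t) hstA (Or.inl rfl) with h | h
      · exact hst (by simp [h])
      · exact hst (by simp only [h, List.mem_append, List.mem_cons] at hmem ⊢; tauto)
    have hprefix := ih (s := r) (t := s) (hnd.sublist (by simp)) (by simp_all) (by simpa using hrs)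
    simp_all [SellerUnprotected]

theorem isChain_protector_eq_of_lastArc [Finite V]
    (hA1 : ¬ ∃ p : List V, IsCycle A p ∧ ∀ a ∈ arcsOf p, f a ≠ a.1)
    (hA2 : ∀ v x : V, x ≠ v → (∃ u, (u, v) ∈ A ∧ f (u, v) = x) →
      ∀ a ∈ A, (a.1 = v ∨ a.2 = v) → (f a = v ∨ f a = x))
    (hA3 : ∀ v x : V,
      (∃ u, (u, v) ∈ A ∧ f (u, v) = x) ↔ (∃ w, (v, w) ∈ A ∧ f (v, w) = x))
    {x : V} {l : List V} {s t : V} (hnd : (l ++ [s, t]).Nodup)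
    (hch : (l ++ [s, t]).IsChain (fun u v => (u, v) ∈ A))
    (hhead : (l ++ [s, t]).head? = some x) (hst : f (s, t) = x) :
    (l ++ [s, t]).IsChain (fun u v => f (u, v) = x) := by
  induction l using List.reverseRecOn generalizing s t with
  | nil => simpa using hst
  | append_singleton l r ih =>
    simp only [List.append_assoc, List.cons_append, List.nil_append] at hnd hch hhead ⊢
    have hs : s ∉ l ++ [r] := List.notMem_of_nodup_append_cons (m := [t]) (by simpa using hnd)
    have hhead' : (l ++ [r, s]).head? = some x := by simpa [List.head?_append] using hhead
    have hx : x ∈ l ++ [r] := List.mem_of_mem_head? (by simpa [List.head?_append] using hhead)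
    have hxs : x ≠ s := fun h => hs (h ▸ hx)
    have hch' : (l ++ [r, s]).IsChain (fun u v => (u, v) ∈ A) := by simp_all
    simp only [List.isChain_append_cons_cons, List.isChain_cons_cons] at hch
    obtain ⟨-, hrsA, hstA, -⟩ := hch
    rcases hA2 s x hxs ((hA3 s x).mpr ⟨t, hstA, hst⟩) (r, s) hrsA (Or.inr rfl) with hrs | hrs
    · have hsu := isChain_sellerUnprotected_of_protector_notMem hA2 (hnd.sublist (by simp)) hch'
        (by simpa [hrs] using hs)
      have hxt : TransGen (SellerUnprotected A f) x t :=
        .tail' (hsu.reflTransGen_of_head?_of_getLast? hhead' (by simp)) ⟨hstA, hst ▸ hxs⟩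
      exact absurd hxt (not_transGen_sellerUnprotected_of_protector_eq hA1 hA3 hstA hst)
    · simpa [hst] using ih (hnd.sublist (by simp)) hch' hhead' hrs

end Protectors

theorem stmt14_general {V : Type*} [Fintype V] (A : Finset (V × V)) (f : V × V → V)
    (hA1 : ¬ ∃ p : List V, IsCycle A p ∧ ∀ a ∈ arcsOf p, f a ≠ a.1)
    (hA2 : ∀ v x : V, x ≠ v → (∃ u, (u, v) ∈ A ∧ f (u, v) = x) →
      ∀ a ∈ A, (a.1 = v ∨ a.2 = v) → (f a = v ∨ f a = x))
    (hA3 : ∀ v x : V,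
      (∃ u, (u, v) ∈ A ∧ f (u, v) = x) ↔ (∃ w, (v, w) ∈ A ∧ f (v, w) = x))
    (x : V) (p : List V)
    (hchain : p.Chain' (fun a b => (a, b) ∈ A)) (hnd : p.Nodup)
    (hhead : p.head? = some x)
    (a : V × V) (hlast : (arcsOf p).getLast? = some a) (hfa : f a = x) :
    ∀ b ∈ arcsOf p, f b = x := by
  obtain ⟨l, rfl⟩ := exists_eq_append_pair_of_getLast?_arcsOf hlast
  exact forall_mem_arcsOf_of_isChain
    (isChain_protector_eq_of_lastArc hA1 hA2 hA3 hnd hchain hhead hfa)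

/-- Theorem "simple paths to/from x" (a): a simple path starting at x whose last arc is
protected by x has all its arcs protected by x. -/
theorem stmt14 {V : Type*} [Fintype V] (A : Finset (V × V)) (f : V × V → V)
    (hA1 : ¬ ∃ p : List V, IsCycle A p ∧ ∀ a ∈ arcsOf p, f a ≠ a.1)
    (hA2 : ∀ v x : V, x ≠ v → (∃ u, (u, v) ∈ A ∧ f (u, v) = x) →
      ∀ a ∈ A, (a.1 = v ∨ a.2 = v) → (f a = v ∨ f a = x))
    (hA3 : ∀ v x : V,
      (∃ u, (u, v) ∈ A ∧ f (u, v) = x) ↔ (∃ w, (v, w) ∈ A ∧ f (v, w) = x))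
    (x : V) (p : List V) (hlen : 2 ≤ p.length)
    (hchain : p.Chain' (fun a b => (a, b) ∈ A)) (hnd : p.Nodup)
    (hhead : p.head? = some x)
    (a : V × V) (hlast : (arcsOf p).getLast? = some a) (hfa : f a = x) :
    ∀ b ∈ arcsOf p, f b = x :=
  stmt14_general A f hA1 hA2 hA3 x p hchain hnd hhead a hlast hfa
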